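/- arXiv:2109.14618 — 3 statements merged into one kernel-verified Lean document; each statement's English description precedes it below -/
import Mathlib

section
/- Let η(x) = -x log x. If 0 ≤ r, s ≤ 1 and |r - s| ≤ 1/2, then |η(r) - η(s)| ≤ η(|r - s|). -/
/-- `η x = -x * log x` (note `Real.log 0 = 0`, so `η 0 = 0`). -/
noncomputable def eta (x : ℝ) : ℝ := -x * Real.log x

/-!
`η` is concave on `[0, ∞)`, so its increments `η (y + t) - η y` decrease in `y`. With `t = r - s`,
comparing the increment at `s` with the one at `0` gives `η r - η s ≤ η t`, and comparing it with
the one at `1 - t` gives `η s - η r ≤ η (1 - t)`. Finally `η (1 - t) ≤ η t` for `t ≤ 1/2`, by two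
applications of `log x ≥ 1 - 1/x`.
-/

open Real

theorem ConcaveOn.map_add_sub_map_le_of_le {𝕜 : Type*} [Field 𝕜] [LinearOrder 𝕜]
    [IsStrictOrderedRing 𝕜] {s : Set 𝕜} {f : 𝕜 → 𝕜} (hf : ConcaveOn 𝕜 s f) {x y t : 𝕜}
    (hx : x ∈ s) (hyt : y + t ∈ s) (hxy : x ≤ y) (ht : 0 ≤ t) :
    f (y + t) - f y ≤ f (x + t) - f x := by
  rcases (add_nonneg (sub_nonneg.2 hxy) ht).eq_or_lt with hd | hd
  · obtain ⟨rfl, rfl⟩ : y = x ∧ t = 0 := by constructor <;> linarith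
    simp
  -- `x + t` and `y` are the convex combinations of `x` and `y + t` with swapped weights.
  set a := (y - x) / (y - x + t)
  set b := t / (y - x + t)
  have ha : 0 ≤ a := div_nonneg (sub_nonneg.2 hxy) hd.le
  have hb : 0 ≤ b := div_nonneg ht hd.le
  have hab : a + b = 1 := by rw [← add_div, div_self hd.ne']
  have hxt := hf.2 hx hyt ha hb hab
  have hy := hf.2 hx hyt hb ha (by rw [add_comm, hab])
  have ex : a • x + b • (y + t) = x + t := by simp only [a, b, smul_eq_mul]; field_simp; ring
  have ey : b • x + a • (y + t) = y := by simp only [a, b, smul_eq_mul]; field_simp; ring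
  rw [ex] at hxt
  rw [ey] at hy
  simp only [smul_eq_mul] at hxt hy
  linear_combination hxt + hy - (f x + f (y + t)) * hab

theorem Real.negMulLog_one_sub_le {t : ℝ} (ht0 : 0 ≤ t) (ht : t ≤ 1 / 2) :
    negMulLog (1 - t) ≤ negMulLog t := by
  rcases ht0.eq_or_lt with rfl | htpos
  · simp
  set u := 1 - t
  have hupos : 0 < u := by linarith
  have hut : 1 - t / u ≤ log u - log t := by
    rw [← log_div hupos.ne' htpos.ne', ← inv_div]
    exact one_sub_inv_le_log_of_pos (div_pos hupos htpos)
  have hu1 : 1 - u⁻¹ ≤ log u := one_sub_inv_le_log_of_pos hupos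
  have hzero : t * (1 - t / u) + (u - t) * (1 - u⁻¹) = 0 := by field_simp; ring
  have := mul_le_mul_of_nonneg_left hut ht0
  have := mul_le_mul_of_nonneg_left hu1 (by linarith : 0 ≤ u - t)
  simp only [negMulLog]
  linarith

/-- If `0 ≤ r, s ≤ 1` and `|r - s| ≤ 1/2`, then `|η r - η s| ≤ η |r - s|`. -/
theorem abs_eta_sub_eta_le (r s : ℝ) (hr0 : 0 ≤ r) (hr1 : r ≤ 1)
    (hs0 : 0 ≤ s) (hs1 : s ≤ 1) (h : |r - s| ≤ 1 / 2) :
    |eta r - eta s| ≤ eta |r - s| := by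
  wlog hsr : s ≤ r generalizing r s
  · simpa only [abs_sub_comm] using
      this s r hs0 hs1 hr0 hr1 (by rwa [abs_sub_comm]) (le_of_not_ge hsr)
  obtain ⟨t, ht, rfl⟩ : ∃ t, 0 ≤ t ∧ r = s + t := ⟨r - s, by linarith, by ring⟩
  rw [add_sub_cancel_left, abs_of_nonneg ht] at h ⊢
  change |negMulLog (s + t) - negMulLog s| ≤ negMulLog t
  have upper := concaveOn_negMulLog.map_add_sub_map_le_of_le
    (Set.mem_Ici.2 le_rfl) (Set.mem_Ici.2 (by linarith)) hs0 ht
  have lower := concaveOn_negMulLog.map_add_sub_map_le_of_le (y := 1 - t)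
    hs0 (Set.mem_Ici.2 (by linarith)) (by linarith) ht
  rw [zero_add, negMulLog_zero, sub_zero] at upper
  rw [sub_add_cancel, negMulLog_one] at lower
  rw [abs_le]
  constructor <;> linarith [negMulLog_one_sub_le ht h]
end

section
/- For positive semidefinite operators P₀ and P₁ on a finite-dimensional Hilbert space, the trace norm of their difference dominates the squared Hilbert–Schmidt norm of the difference of their square roots: ‖P₀ - P₁‖₁ ≥ ‖√P₀ - √P₁‖₂². -/
/-!
Let `A = √P₀`, `B = √P₁` and let `v` be a unit eigenvector of `A - B`, say `(A - B) v = μ v`.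
With `a = re ⟪v, A v⟫ ≥ 0` and `b = re ⟪v, B v⟫ ≥ 0` we have `μ = a - b`, and
`re ⟪v, (A² - B²) v⟫ = ‖A v‖² - ‖B v‖² = re ⟪(A - B) v, (A + B) v⟫ = μ (a + b)`.
Hence `μ² = |μ| |a - b| ≤ |μ| (a + b) = |re ⟪v, (P₀ - P₁) v⟫| ≤ re ⟪v, |P₀ - P₁| v⟫`, the last step
because `-|D| ≤ D ≤ |D|`. Summing over an orthonormal eigenbasis of `A - B` gives
`tr (A - B)² ≤ tr |P₀ - P₁|`.
-/

open Matrix ComplexOrder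

/-- The positive semidefinite square root of a positive semidefinite matrix, as defined in the
older Mathlib (`Matrix.PosSemidef.sqrt`, since removed). -/
noncomputable def Matrix.PosSemidef.sqrt {n 𝕜 : Type*} [Fintype n] [RCLike 𝕜] [DecidableEq n]
    {A : Matrix n n 𝕜} (hA : A.PosSemidef) : Matrix n n 𝕜 :=
  hA.1.eigenvectorUnitary.1 * diagonal ((↑) ∘ (√·) ∘ hA.1.eigenvalues) *
  (star hA.1.eigenvectorUnitary : Matrix n n 𝕜)

/-- The Schatten 1-norm (trace norm) `‖X‖₁ = tr √(Xᴴ X)` of a complex matrix. -/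
noncomputable def traceNorm {m n : Type*} [Fintype m] [Fintype n] [DecidableEq n]
    (X : Matrix m n ℂ) : ℝ :=
  ((Matrix.posSemidef_conjTranspose_mul_self X).sqrt).trace.re

namespace LinearMap

open scoped InnerProductSpace
open RCLike

variable {𝕜 E : Type*} [RCLike 𝕜] [NormedAddCommGroup E] [InnerProductSpace 𝕜 E]

lemma sq_le_abs_re_inner_mul_self_sub_mul_self {A B : E →ₗ[𝕜] E} (hA : A.IsPositive)
    (hB : B.IsPositive) {v : E} (hv : ‖v‖ = 1) {μ : ℝ} (hμ : (A - B) v = (μ : 𝕜) • v) :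
    μ ^ 2 ≤ |re ⟪v, (A * A - B * B) v⟫_𝕜| := by
  set a := re ⟪v, A v⟫_𝕜
  set b := re ⟪v, B v⟫_𝕜
  have hμ' : A v - B v = (μ : 𝕜) • v := hμ
  have hμab : μ = a - b := by
    have := congrArg (fun w => re ⟪v, w⟫_𝕜) hμ'
    simp only [inner_sub_right, inner_smul_right, map_sub, re_ofReal_mul,
      inner_self_eq_norm_sq_to_K, hv] at this
    simpa [a, b] using this.symm
  have hD : re ⟪v, (A * A - B * B) v⟫_𝕜 = μ * (a + b) :=
    calc re ⟪v, (A * A - B * B) v⟫_𝕜 = re ⟪A v - B v, A v + B v⟫_𝕜 := by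
          simp only [sub_apply, Module.End.mul_apply, inner_sub_right, inner_sub_left,
            inner_add_right, ← hA.isSymmetric _ (A v), ← hB.isSymmetric _ (B v), map_sub, map_add]
          rw [← inner_conj_symm (A v) (B v), conj_re]
          ring
      _ = μ * (a + b) := by
          rw [hμ', inner_smul_left, conj_ofReal, re_ofReal_mul, inner_add_right, map_add]
  have hab : |a - b| ≤ a + b := abs_sub_le_iff.mpr
    ⟨by linarith [hB.re_inner_nonneg_right v], by linarith [hA.re_inner_nonneg_right v]⟩
  calc μ ^ 2 = |μ| * |a - b| := by rw [← hμab, abs_mul_abs_self, sq]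
    _ ≤ |μ| * (a + b) := by gcongr
    _ = |re ⟪v, (A * A - B * B) v⟫_𝕜| := by
      rw [hD, abs_mul, abs_of_nonneg (le_trans (abs_nonneg _) hab)]

lemma abs_re_inner_le_of_neg_le_of_le {D R : E →ₗ[𝕜] E} (hl : -R ≤ D) (hu : D ≤ R) (v : E) :
    |re ⟪v, D v⟫_𝕜| ≤ re ⟪v, R v⟫_𝕜 := by
  have hl' := (le_def _ _).mp hl |>.re_inner_nonneg_right v
  have hu' := (le_def _ _).mp hu |>.re_inner_nonneg_right v
  simp only [sub_apply, neg_apply, inner_sub_right, inner_neg_right, map_sub, map_neg] at hl' hu'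
  exact abs_le.mpr ⟨by linarith, by linarith⟩

lemma re_trace_sub_mul_sub_le_of_neg_le_of_le [FiniteDimensional 𝕜 E] {A B R : E →ₗ[𝕜] E}
    (hA : A.IsPositive) (hB : B.IsPositive) (hl : -R ≤ A * A - B * B) (hu : A * A - B * B ≤ R) :
    re (trace 𝕜 E ((A - B) * (A - B))) ≤ re (trace 𝕜 E R) := by
  have hM : (A - B).IsSymmetric := hA.isSymmetric.sub hB.isSymmetric
  let b := hM.eigenvectorBasis rfl
  rw [trace_eq_sum_inner _ b, trace_eq_sum_inner _ b, map_sum, map_sum]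
  refine Finset.sum_le_sum fun i _ => ?_
  have hv : ‖b i‖ = 1 := b.orthonormal.1 i
  have hμ := hM.apply_eigenvectorBasis rfl i
  calc re ⟪b i, ((A - B) * (A - B)) (b i)⟫_𝕜 = hM.eigenvalues rfl i ^ 2 := by
        rw [Module.End.mul_apply, hμ, map_smul, hμ, inner_smul_right, inner_smul_right,
          inner_self_eq_norm_sq_to_K, hv]
        simp [sq]
    _ ≤ |re ⟪b i, (A * A - B * B) (b i)⟫_𝕜| := sq_le_abs_re_inner_mul_self_sub_mul_self hA hB hv hμ
    _ ≤ re ⟪b i, R (b i)⟫_𝕜 := abs_re_inner_le_of_neg_le_of_le hl hu _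

end LinearMap

namespace CFC

variable {A : Type*} [NonUnitalRing A] [StarRing A] [TopologicalSpace A]
  [Module ℝ A] [SMulCommClass ℝ A A] [IsScalarTower ℝ A A]
  [NonUnitalContinuousFunctionalCalculus ℝ A IsSelfAdjoint]
  [PartialOrder A] [StarOrderedRing A] [NonnegSpectrumClass ℝ A] [IsTopologicalRing A]
  [T2Space A]

lemma le_abs (a : A) (ha : IsSelfAdjoint a := by cfc_tac) : a ≤ abs a := by
  rw [← sub_nonneg, abs_sub_self a]
  exact smul_nonneg zero_le_two (negPart_nonneg a)

lemma neg_abs_le (a : A) (ha : IsSelfAdjoint a := by cfc_tac) : -abs a ≤ a := by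
  rw [neg_le_iff_add_nonneg, add_comm, abs_add_self a]
  exact smul_nonneg zero_le_two (posPart_nonneg a)

end CFC

namespace Matrix

variable {n 𝕜 : Type*} [Fintype n] [DecidableEq n] [RCLike 𝕜]

lemma trace_toEuclideanLin (X : Matrix n n 𝕜) :
    LinearMap.trace 𝕜 _ (toEuclideanLin X) = X.trace := by
  rw [toEuclideanLin_eq_toLin_orthonormal, trace_toLin_eq]

lemma toEuclideanLin_mul (X Y : Matrix n n 𝕜) :
    toEuclideanLin (X * Y) = toEuclideanLin X * toEuclideanLin Y := by
  ext
  simp [mulVec_mulVec]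

open scoped MatrixOrder

lemma toEuclideanLin_le_toEuclideanLin_iff {X Y : Matrix n n 𝕜} :
    toEuclideanLin X ≤ toEuclideanLin Y ↔ X ≤ Y := by
  rw [LinearMap.le_def, ← map_sub, isPositive_toEuclideanLin_iff, le_iff]

lemma re_trace_sub_mul_sub_le_of_neg_le_of_le {A B R : Matrix n n 𝕜} (hA : A.PosSemidef)
    (hB : B.PosSemidef) (hl : -R ≤ A * A - B * B) (hu : A * A - B * B ≤ R) :
    RCLike.re ((A - B) * (A - B)).trace ≤ RCLike.re R.trace := by
  rw [← trace_toEuclideanLin, ← trace_toEuclideanLin, toEuclideanLin_mul, map_sub]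
  rw [← toEuclideanLin_le_toEuclideanLin_iff] at hl hu
  simp only [map_neg, map_sub, toEuclideanLin_mul] at hl hu
  exact LinearMap.re_trace_sub_mul_sub_le_of_neg_le_of_le
    (isPositive_toEuclideanLin_iff.mpr hA) (isPositive_toEuclideanLin_iff.mpr hB) hl hu

namespace PosSemidef

lemma sqrt_eq_cfcSqrt {A : Matrix n n 𝕜} (hA : A.PosSemidef) : hA.sqrt = CFC.sqrt A := by
  rw [CFC.sqrt_eq_real_sqrt A hA.nonneg, cfcₙ_eq_cfc, hA.1.cfc_eq, IsHermitian.cfc,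
    Unitary.conjStarAlgAut_apply]
  rfl

lemma posSemidef_sqrt {A : Matrix n n 𝕜} (hA : A.PosSemidef) : hA.sqrt.PosSemidef := by
  rw [hA.sqrt_eq_cfcSqrt]
  exact (CFC.sqrt_nonneg A).posSemidef

lemma sqrt_mul_self {A : Matrix n n 𝕜} (hA : A.PosSemidef) : hA.sqrt * hA.sqrt = A := by
  rw [hA.sqrt_eq_cfcSqrt]
  exact CFC.sqrt_mul_sqrt_self A hA.nonneg

lemma re_trace_mul_self_sqrt_sub_le_re_trace_abs {A B : Matrix n n 𝕜} (hA : A.PosSemidef)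
    (hB : B.PosSemidef) :
    RCLike.re ((hA.sqrt - hB.sqrt) * (hA.sqrt - hB.sqrt)).trace ≤
      RCLike.re (CFC.abs (A - B)).trace := by
  have hD : IsSelfAdjoint (A - B) := hA.1.sub hB.1
  have hsq : hA.sqrt * hA.sqrt - hB.sqrt * hB.sqrt = A - B := by
    rw [hA.sqrt_mul_self, hB.sqrt_mul_self]
  refine re_trace_sub_mul_sub_le_of_neg_le_of_le hA.posSemidef_sqrt hB.posSemidef_sqrt ?_ ?_
  · rw [hsq]; exact CFC.neg_abs_le _ hD
  · rw [hsq]; exact CFC.le_abs _ hD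

end PosSemidef

end Matrix

open scoped MatrixOrder in
lemma traceNorm_eq_re_trace_abs {n : Type*} [Fintype n] [DecidableEq n] (X : Matrix n n ℂ) :
    traceNorm X = (CFC.abs X).trace.re := by
  rw [traceNorm, PosSemidef.sqrt_eq_cfcSqrt, CFC.abs, star_eq_conjTranspose]

/-- For positive semidefinite matrices `P₀, P₁`,
`‖P₀ - P₁‖₁ ≥ ‖√P₀ - √P₁‖₂²` where `‖X‖₂² = tr (Xᴴ X)` is the squared Frobenius norm. -/
theorem traceNorm_sub_ge_sq_frobenius_sqrt {d : ℕ}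
    (P₀ P₁ : Matrix (Fin d) (Fin d) ℂ) (h₀ : P₀.PosSemidef) (h₁ : P₁.PosSemidef) :
    (((h₀.sqrt - h₁.sqrt)ᴴ * (h₀.sqrt - h₁.sqrt)).trace).re ≤ traceNorm (P₀ - P₁) := by
  rw [traceNorm_eq_re_trace_abs, (h₀.posSemidef_sqrt.1.sub h₁.posSemidef_sqrt.1).eq]
  exact h₀.re_trace_mul_self_sqrt_sub_le_re_trace_abs h₁
end

section
/- Distinguishing implies state-specific unitary reconstruction: suppose that for every pair of orthogonal unit vectors ψ, φ ∈ H_code there exists a projector Π_B on H_B with ⟨ψ|V†Π_B V|ψ⟩ ≥ 1 - ε₃ and ⟨φ|V†Π_B V|φ⟩ ≤ ε₃. Then for a fixed unit vector ψ₀ and any unitary U_code on H_code, there exists a unitary U_B on H_B with ‖V U_code ψ₀ - U_B V ψ₀‖ ≤ 2√(ε₃). -/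
/-!
Choose a phase `a` with `a ⟨ψ₀|U ψ₀⟩ ≥ 0` and put `u = a U ψ₀`. Then `p = ψ₀ + u` and `m = ψ₀ - u`
are orthogonal with `‖p‖² + ‖m‖² = 4`, so the distinguishing hypothesis, rescaled from unit
vectors, gives a projector `Π` with `⟨p|V†ΠV|p⟩ ≥ (1 - ε)‖p‖²` and `⟨m|V†ΠV|m⟩ ≤ ε‖m‖²`.
For `U_B = ā (2Π - 1)` the rotated error `a (V U ψ₀ - U_B V ψ₀)` is `(1 - Π) V p - Π V m`, a sum
of orthogonal vectors, so its squared norm is `‖p‖² - ⟨p|V†ΠV|p⟩ + ⟨m|V†ΠV|m⟩ ≤ 4ε`.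
-/

open Matrix Kronecker

/-- The Hilbert space norm of a vector in `ℂ^n`. -/
noncomputable def vecNorm {n : Type*} [Fintype n] (ψ : n → ℂ) : ℝ :=
  Real.sqrt (∑ i, Complex.normSq (ψ i))

section VecNorm

variable {n : Type*} [Fintype n]

theorem vecNorm_eq_norm_toLp (x : n → ℂ) : vecNorm x = ‖WithLp.toLp 2 x‖ := by
  simp [vecNorm, EuclideanSpace.norm_eq, Complex.normSq_eq_norm_sq]

theorem star_dotProduct_eq_inner (x y : n → ℂ) :
    star x ⬝ᵥ y = inner ℂ (WithLp.toLp 2 x) (WithLp.toLp 2 y) := by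
  rw [EuclideanSpace.inner_toLp_toLp, dotProduct_comm]

theorem star_dotProduct_self_eq_vecNorm_sq (x : n → ℂ) :
    star x ⬝ᵥ x = ((vecNorm x ^ 2 : ℝ) : ℂ) := by
  rw [star_dotProduct_eq_inner, inner_self_eq_norm_sq_to_K, vecNorm_eq_norm_toLp]
  push_cast; rfl

theorem vecNorm_nonneg (x : n → ℂ) : 0 ≤ vecNorm x := Real.sqrt_nonneg _

theorem vecNorm_smul (c : ℂ) (x : n → ℂ) : vecNorm (c • x) = ‖c‖ * vecNorm x := by
  simp only [vecNorm_eq_norm_toLp, WithLp.toLp_smul, norm_smul]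

theorem vecNorm_add_sq_add_vecNorm_sub_sq (x y : n → ℂ) :
    vecNorm (x + y) ^ 2 + vecNorm (x - y) ^ 2 = 2 * (vecNorm x ^ 2 + vecNorm y ^ 2) := by
  simpa only [vecNorm_eq_norm_toLp, WithLp.toLp_add, WithLp.toLp_sub, ← sq]
    using parallelogram_law_with_norm ℂ (WithLp.toLp 2 x) (WithLp.toLp 2 y)

theorem star_add_dotProduct_sub_eq_zero {x y : n → ℂ} (hxy : vecNorm x = vecNorm y)
    (hreal : IsSelfAdjoint (star x ⬝ᵥ y)) : star (x + y) ⬝ᵥ (x - y) = 0 := by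
  have hyx : star y ⬝ᵥ x = star x ⬝ᵥ y := by rw [star_dotProduct, hreal.star_eq]
  simp only [star_add, add_dotProduct, dotProduct_sub, star_dotProduct_self_eq_vecNorm_sq, hxy,
    hyx]
  ring

theorem exists_mem_unitary_star_add_smul_dotProduct_sub_smul_eq_zero {x y : n → ℂ}
    (hxy : vecNorm x = vecNorm y) : ∃ a ∈ unitary ℂ, star (x + a • y) ⬝ᵥ (x - a • y) = 0 := by
  obtain ⟨a, ha, haxy⟩ := Complex.exists_norm_eq_mul_self (star x ⬝ᵥ y)
  refine ⟨a, ?_, star_add_dotProduct_sub_eq_zero ?_ ?_⟩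
  · rw [Unitary.mem_iff, Complex.star_def, Complex.mul_conj', Complex.conj_mul', ha]
    norm_num
  · rw [vecNorm_smul, ha, one_mul, hxy]
  · rw [dotProduct_smul, smul_eq_mul, ← haxy]
    exact Complex.conj_ofReal _

end VecNorm

section Expectation

variable {n m : Type*} [Fintype n] [Fintype m]

noncomputable def expectation (A : Matrix n n ℂ) (x : n → ℂ) : ℝ :=
  (star x ⬝ᵥ A *ᵥ x).re

@[simp]
theorem expectation_zero (x : n → ℂ) : expectation 0 x = 0 := by simp [expectation]

theorem expectation_one [DecidableEq n] (x : n → ℂ) : expectation 1 x = vecNorm x ^ 2 := by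
  rw [expectation, one_mulVec, star_dotProduct_self_eq_vecNorm_sq, Complex.ofReal_re]

theorem expectation_smul (A : Matrix n n ℂ) (c : ℂ) (x : n → ℂ) :
    expectation A (c • x) = ‖c‖ ^ 2 * expectation A x := by
  simp only [expectation, mulVec_smul, star_smul, smul_dotProduct, dotProduct_smul, smul_eq_mul,
    ← mul_assoc, Complex.star_def, Complex.mul_conj', ← Complex.ofReal_pow,
    Complex.re_ofReal_mul]

theorem expectation_conjTranspose_mul_mul (V : Matrix m n ℂ) (A : Matrix m m ℂ) (x : n → ℂ) :
    expectation (Vᴴ * A * V) x = expectation A (V *ᵥ x) := by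
  rw [expectation, expectation, star_mulVec, ← mulVec_mulVec, ← mulVec_mulVec, dotProduct_mulVec,
    vecMul_conjTranspose]

theorem vecNorm_mulVec_of_conjTranspose_mul_self [DecidableEq n] [DecidableEq m]
    {V : Matrix m n ℂ} (hV : Vᴴ * V = 1) (x : n → ℂ) : vecNorm (V *ᵥ x) = vecNorm x := by
  have h := expectation_conjTranspose_mul_mul V 1 x
  rw [Matrix.mul_one, hV, expectation_one, expectation_one] at h
  exact (pow_left_inj₀ (vecNorm_nonneg _) (vecNorm_nonneg _) two_ne_zero).mp h.symm

theorem vecNorm_sub_mulVec_sub_mulVec_sq {P : Matrix n n ℂ} (hP : IsStarProjection P)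
    (x y : n → ℂ) :
    vecNorm (x - P *ᵥ x - P *ᵥ y) ^ 2 = vecNorm x ^ 2 - expectation P x + expectation P y := by
  have hadj (v w : n → ℂ) : star (P *ᵥ v) ⬝ᵥ w = star v ⬝ᵥ P *ᵥ w := by
    rw [star_mulVec, ← dotProduct_mulVec, ← star_eq_conjTranspose, hP.isSelfAdjoint.star_eq]
  have hidem (v : n → ℂ) : P *ᵥ P *ᵥ v = P *ᵥ v := by
    rw [mulVec_mulVec, hP.isIdempotentElem.eq]
  have h : star (x - P *ᵥ x - P *ᵥ y) ⬝ᵥ (x - P *ᵥ x - P *ᵥ y) =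
      star x ⬝ᵥ x - star x ⬝ᵥ P *ᵥ x + star y ⬝ᵥ P *ᵥ y := by
    simp only [star_sub, sub_dotProduct, dotProduct_sub, hadj, hidem]
    ring
  rw [star_dotProduct_self_eq_vecNorm_sq, star_dotProduct_self_eq_vecNorm_sq] at h
  simpa only [expectation, Complex.add_re, Complex.sub_re, Complex.ofReal_re]
    using congrArg Complex.re h

end Expectation

section Ampliation

variable (R n k : Type*) [CommSemiring R] [StarRing R] [Fintype n] [DecidableEq n]
  [Fintype k] [DecidableEq k]

def ampliation : Matrix n n R →⋆ₐ[R] Matrix (n × k) (n × k) R where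
  toFun A := A ⊗ₖ (1 : Matrix k k R)
  map_one' := one_kronecker_one
  map_mul' A B := by rw [← mul_kronecker_mul, Matrix.one_mul]
  map_zero' := zero_kronecker _
  map_add' A B := add_kronecker _ _ _
  commutes' r := by
    simp only [Algebra.algebraMap_eq_smul_one, smul_kronecker, one_kronecker_one]
  map_star' A := by simp [star_eq_conjTranspose, conjTranspose_kronecker]

variable {R n k}

@[simp]
theorem ampliation_apply (A : Matrix n n R) :
    ampliation R n k A = A ⊗ₖ (1 : Matrix k k R) := rfl

end Ampliation

section Distinguishing

variable {n : Type*} [Fintype n] [DecidableEq n] {S : Set (Matrix n n ℂ)} {ε : ℝ}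

theorem exists_mem_expectation_bounds_of_orthogonal (h0 : 0 ∈ S) (h1 : 1 ∈ S) (hε : 0 ≤ ε)
    (hS : ∀ ψ φ : n → ℂ, vecNorm ψ = 1 → vecNorm φ = 1 → star ψ ⬝ᵥ φ = 0 →
      ∃ A ∈ S, 1 - ε ≤ expectation A ψ ∧ expectation A φ ≤ ε)
    {p m : n → ℂ} (hpm : star p ⬝ᵥ m = 0) :
    ∃ A ∈ S,
      (1 - ε) * vecNorm p ^ 2 ≤ expectation A p ∧ expectation A m ≤ ε * vecNorm m ^ 2 := by
  rcases eq_or_ne (vecNorm p) 0 with hp | hp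
  · exact ⟨0, h0, by simp [hp], by rw [expectation_zero]; positivity⟩
  rcases eq_or_ne (vecNorm m) 0 with hm | hm
  · exact ⟨1, h1, by rw [expectation_one]; exact mul_le_of_le_one_left (sq_nonneg _) (by linarith),
      by rw [expectation_one, hm]; simp⟩
  have hunit {x : n → ℂ} (hx : vecNorm x ≠ 0) : vecNorm ((vecNorm x : ℂ)⁻¹ • x) = 1 := by
    rw [vecNorm_smul, norm_inv, Complex.norm_real, Real.norm_of_nonneg (vecNorm_nonneg x),
      inv_mul_cancel₀ hx]
  obtain ⟨A, hA, hAp, hAm⟩ := hS _ _ (hunit hp) (hunit hm) (by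
    simp only [star_smul, smul_dotProduct, dotProduct_smul, hpm, smul_zero])
  have hscale {x : n → ℂ} (hx : vecNorm x ≠ 0) :
      expectation A x = vecNorm x ^ 2 * expectation A ((vecNorm x : ℂ)⁻¹ • x) := by
    rw [expectation_smul, norm_inv, Complex.norm_real, Real.norm_of_nonneg (vecNorm_nonneg x),
      inv_pow, mul_inv_cancel_left₀ (pow_ne_zero 2 hx)]
  refine ⟨A, hA, ?_, ?_⟩
  · rw [hscale hp, mul_comm]
    exact mul_le_mul_of_nonneg_left hAp (sq_nonneg _)
  · rw [hscale hm, mul_comm ε]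
    exact mul_le_mul_of_nonneg_left hAm (sq_nonneg _)

end Distinguishing

theorem smul_sub_smul_two_mul_sub_one_mulVec {N : Type*} [Fintype N] [DecidableEq N] {a : ℂ}
    (ha : a ∈ unitary ℂ) (P : Matrix N N ℂ) (v w : N → ℂ) :
    a • (w - (star a • (2 * P - 1)) *ᵥ v) = v + a • w - P *ᵥ (v + a • w) - P *ᵥ (v - a • w) := by
  simp only [smul_mulVec, sub_mulVec, one_mulVec, mulVec_add, mulVec_sub, smul_sub, smul_smul,
    Unitary.mul_star_self_of_mem ha, one_smul, two_mul, add_mulVec, mulVec_smul]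
  abel

/-- Distinguishing implies state-specific unitary reconstruction: if for every pair of
orthogonal unit vectors `ψ, φ` in the code space there is a projector `Π_B` on `H_B` with
`⟨ψ|V†Π_B V|ψ⟩ ≥ 1 - ε₃` and `⟨φ|V†Π_B V|φ⟩ ≤ ε₃`, then for any unit vector `ψ₀` and any
unitary `U_code` there is a unitary `U_B` on `H_B` with
`‖V U_code ψ₀ - U_B V ψ₀‖ ≤ 2√ε₃`. -/
theorem distinguishing_implies_state_specific_reconstruction
    {c nb nb' : ℕ}
    (V : Matrix (Fin nb × Fin nb') (Fin c) ℂ) (hV : Vᴴ * V = 1)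
    (ε₃ : ℝ) (hε₃ : 0 ≤ ε₃)
    (hdist : ∀ ψ φ : Fin c → ℂ, vecNorm ψ = 1 → vecNorm φ = 1 → star ψ ⬝ᵥ φ = 0 →
      ∃ Proj : Matrix (Fin nb) (Fin nb) ℂ, Proj.IsHermitian ∧ Proj * Proj = Proj ∧
        1 - ε₃ ≤
          (star ψ ⬝ᵥ (Vᴴ * (Proj ⊗ₖ (1 : Matrix (Fin nb') (Fin nb') ℂ)) * V).mulVec ψ).re ∧
        (star φ ⬝ᵥ (Vᴴ * (Proj ⊗ₖ (1 : Matrix (Fin nb') (Fin nb') ℂ)) * V).mulVec φ).re ≤ ε₃)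
    (ψ₀ : Fin c → ℂ) (hψ₀ : vecNorm ψ₀ = 1)
    (U : Matrix (Fin c) (Fin c) ℂ) (hU : U ∈ unitary (Matrix (Fin c) (Fin c) ℂ)) :
    ∃ UB : Matrix (Fin nb) (Fin nb) ℂ, UB ∈ unitary (Matrix (Fin nb) (Fin nb) ℂ) ∧
      vecNorm (V.mulVec (U.mulVec ψ₀) -
          ((UB ⊗ₖ (1 : Matrix (Fin nb') (Fin nb') ℂ)) * V).mulVec ψ₀)
        ≤ 2 * Real.sqrt ε₃ := by
  have hUψ₀ : vecNorm (U *ᵥ ψ₀) = 1 := by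
    rw [vecNorm_mulVec_of_conjTranspose_mul_self (Unitary.star_mul_self_of_mem hU), hψ₀]
  obtain ⟨a, haU, horth⟩ :=
    exists_mem_unitary_star_add_smul_dotProduct_sub_smul_eq_zero (hψ₀.trans hUψ₀.symm)
  have ha : ‖a‖ = 1 := CStarRing.norm_of_mem_unitary haU
  set u := a • U *ᵥ ψ₀
  have hu : vecNorm u = 1 := by rw [vecNorm_smul, ha, hUψ₀, one_mul]
  obtain ⟨_, ⟨Proj, hProj, rfl⟩, hp, hm⟩ := exists_mem_expectation_bounds_of_orthogonal
    (S := {A | ∃ Proj, IsStarProjection Proj ∧ Vᴴ * ampliation ℂ (Fin nb) (Fin nb') Proj * V = A})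
    ⟨0, .zero _, by simp⟩ ⟨1, .one _, by simp [hV]⟩ hε₃
    (fun ψ φ hψ hφ hψφ ↦
      have ⟨Proj, hherm, hidem, h⟩ := hdist ψ φ hψ hφ hψφ
      ⟨_, ⟨Proj, ⟨hidem, hherm.isSelfAdjoint⟩, rfl⟩, h⟩) horth
  refine ⟨star a • (2 * Proj - 1),
    Unitary.smul_mem_of_mem (Unitary.star_mem haU) hProj.two_mul_sub_one_mem_unitary, ?_⟩
  rw [expectation_conjTranspose_mul_mul] at hp hm
  set P := ampliation ℂ (Fin nb) (Fin nb') Proj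
  rw [← pow_le_pow_iff_left₀ (vecNorm_nonneg _) (by positivity) two_ne_zero]
  calc vecNorm (V *ᵥ U *ᵥ ψ₀ - (ampliation ℂ _ (Fin nb') (star a • (2 * Proj - 1)) * V) *ᵥ ψ₀) ^ 2
      = vecNorm (V *ᵥ (ψ₀ + u) - P *ᵥ V *ᵥ (ψ₀ + u) - P *ᵥ V *ᵥ (ψ₀ - u)) ^ 2 := by
        rw [← one_mul (vecNorm _), ← ha, ← vecNorm_smul, map_smul, map_sub, map_mul, map_ofNat,
          map_one, ← mulVec_mulVec, smul_sub_smul_two_mul_sub_one_mulVec haU, ← mulVec_smul,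
          ← mulVec_add, ← mulVec_sub]
    _ = vecNorm (V *ᵥ (ψ₀ + u)) ^ 2 - expectation P (V *ᵥ (ψ₀ + u)) +
          expectation P (V *ᵥ (ψ₀ - u)) := vecNorm_sub_mulVec_sub_mulVec_sq (hProj.map _) _ _
    _ ≤ ε₃ * (vecNorm (ψ₀ + u) ^ 2 + vecNorm (ψ₀ - u) ^ 2) := by
        rw [vecNorm_mulVec_of_conjTranspose_mul_self hV]
        linarith
    _ = (2 * √ε₃) ^ 2 := by
        rw [vecNorm_add_sq_add_vecNorm_sub_sq, hψ₀, hu, mul_pow, Real.sq_sqrt hε₃]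
        ring
end
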